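/- For any vector 𝐍 = (N_1,…,N_k) of positive integers and any integer m ≥ 1, the integer 𝐁_𝐍(1) divides the integer 𝐁_𝐍(m). -/

import Mathlib

open Finset

/-- The `n`-th harmonic number `H_n = 1 + 1/2 + ⋯ + 1/n`, as a rational (`H_0 = 0`). -/
def harm (n : ℕ) : ℚ := ∑ i ∈ Finset.range n, (1 : ℚ) / (i + 1)

/-- Subsets of the set of distinct prime factors of `N` having even cardinality. -/
def evenSub (N : ℕ) : Finset (Finset ℕ) :=
  N.primeFactors.powerset.filter fun J => Even J.card

/-- Subsets of the set of distinct prime factors of `N` having odd cardinality. -/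
def oddSub (N : ℕ) : Finset (Finset ℕ) :=
  N.primeFactors.powerset.filter fun J => Odd J.card

/-- `∏_{j=1}^μ (α_j m)!`, where the `α_j` are the quotients of `N` by products of evenly
many distinct prime factors of `N`. -/
def Bnum (N m : ℕ) : ℕ :=
  ∏ J ∈ evenSub N, Nat.factorial ((N / ∏ p ∈ J, p) * m)

/-- `∏_{j=1}^η (β_j m)!`, where the `β_j` are the quotients of `N` by products of oddly
many distinct prime factors of `N`, padded with `φ(N)` entries equal to `1` (so that
`Σ α_j = Σ β_j`). -/
def Bden (N m : ℕ) : ℕ :=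
  (∏ J ∈ oddSub N, Nat.factorial ((N / ∏ p ∈ J, p) * m)) * (Nat.factorial m) ^ N.totient

/-- `𝐁_N(m) = (∏ (α_j m)!)/(∏ (β_j m)!)`. -/
noncomputable def BB (N m : ℕ) : ℚ := (Bnum N m : ℚ) / (Bden N m : ℚ)

/-- `𝐁_𝐍(m) = ∏_{j=1}^k 𝐁_{N_j}(m)` for a vector `𝐍 = (N_1, …, N_k)`. -/
noncomputable def BBvec {k : ℕ} (N : Fin k → ℕ) (m : ℕ) : ℚ := ∏ i, BB (N i) m

/-!
Legendre's formula and inclusion–exclusion over the prime factors of `N` give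
`v_p(𝐁_N(m)) = ∑_{i ≥ 1} c_N(⌊N (m mod p^i) / p^i⌋)`, where `c_N(x)` counts the integers in
`(0, x]` coprime to `N`; the identity `⌊(N/d) m / p^i⌋ = ⌊⌊N m / p^i⌋ / d⌋` and the periodicity
of coprimality modulo `N` do the bookkeeping. If `p^v ∥ m`, then `m mod p^(i+v) ≥ p^v`, so since
`c_N` is monotone the `(i+v)`-th term for `m` dominates the `i`-th term for `m = 1`.
-/

def coprimeCount (N n : ℕ) : ℕ := #{k ∈ Ioc 0 n | N.Coprime k}

lemma coprimeCount_mono (N : ℕ) : Monotone (coprimeCount N) := fun _ _ h =>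
  card_le_card (filter_subset_filter _ (Ioc_subset_Ioc_right h))

lemma coprimeCount_add_self (N n : ℕ) :
    coprimeCount N (n + N) = coprimeCount N n + N.totient := by
  have hsplit : Ioc 0 (n + N) = Ioc 0 n ∪ Ico (n + 1) (n + 1 + N) := by
    ext k; simp only [mem_union, mem_Ioc, mem_Ico]; omega
  have hdisj : Disjoint (Ioc 0 n) (Ico (n + 1) (n + 1 + N)) := by
    simp only [disjoint_left, mem_Ioc, mem_Ico]; omega
  rw [coprimeCount, hsplit, filter_union, card_union_of_disjoint (disjoint_filter_filter hdisj),
    Nat.filter_coprime_Ico_eq_totient, coprimeCount]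

lemma coprimeCount_mul_add (N c r : ℕ) :
    coprimeCount N (N * c + r) = N.totient * c + coprimeCount N r := by
  induction c with
  | zero => simp
  | succ c ih => rw [mul_add_one, add_right_comm, coprimeCount_add_self, ih]; ring

lemma coprimeCount_mul_div (N m t : ℕ) (ht : 0 < t) :
    coprimeCount N (N * m / t) = N.totient * (m / t) + coprimeCount N (N * (m % t) / t) := by
  have : N * m = N * (m % t) + N * (m / t) * t := by
    conv_lhs => rw [← Nat.mod_add_div m t]
    ring
  rw [this, Nat.add_mul_div_right _ _ ht, add_comm, coprimeCount_mul_add]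

lemma coprime_iff_forall_primeFactors_not_dvd {N : ℕ} (hN : N ≠ 0) (k : ℕ) :
    N.Coprime k ↔ ∀ p ∈ N.primeFactors, ¬ p ∣ k := by
  rw [← not_iff_not, Nat.Prime.not_coprime_iff_dvd]
  simp [Nat.mem_primeFactors, hN]

lemma prod_dvd_iff_forall_dvd {J : Finset ℕ} (hJ : ∀ p ∈ J, p.Prime) (k : ℕ) :
    ∏ p ∈ J, p ∣ k ↔ ∀ p ∈ J, p ∣ k :=
  ⟨fun h _ hp => (dvd_prod_of_mem _ hp).trans h,
    prod_primes_dvd k fun p hp => (hJ p hp).prime⟩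

theorem coprimeCount_eq_sum_powerset {N : ℕ} (hN : N ≠ 0) (n : ℕ) :
    (coprimeCount N n : ℤ) =
      ∑ J ∈ N.primeFactors.powerset, (-1) ^ #J * ((n / ∏ p ∈ J, p : ℕ) : ℤ) := by
  have hind : ∀ k, (if N.Coprime k then 1 else 0 : ℤ) =
      ∑ J ∈ N.primeFactors.powerset, (-1) ^ #J * if ∏ p ∈ J, p ∣ k then 1 else 0 := by
    intro k
    rw [if_congr (coprime_iff_forall_primeFactors_not_dvd hN k) rfl rfl, ← prod_boole]
    calc ∏ p ∈ N.primeFactors, (if ¬ p ∣ k then 1 else 0 : ℤ)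
        = ∏ p ∈ N.primeFactors, (-(if p ∣ k then 1 else 0) + 1 : ℤ) :=
          prod_congr rfl fun p _ => by split_ifs <;> simp
      _ = _ := by
          rw [prod_add_one]
          refine sum_congr rfl fun J hJ => ?_
          rw [prod_neg, prod_boole,
            if_congr (prod_dvd_iff_forall_dvd (fun p hp => Nat.prime_of_mem_primeFactors
              (mem_powerset.mp hJ hp)) k).symm rfl rfl]
  calc (coprimeCount N n : ℤ)
      = ∑ k ∈ Ioc 0 n, ∑ J ∈ N.primeFactors.powerset,
          (-1) ^ #J * if ∏ p ∈ J, p ∣ k then 1 else 0 := by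
        rw [coprimeCount, natCast_card_filter]
        exact sum_congr rfl fun k _ => hind k
    _ = ∑ J ∈ N.primeFactors.powerset, (-1) ^ #J * (#{k ∈ Ioc 0 n | ∏ p ∈ J, p ∣ k} : ℤ) := by
        rw [sum_comm]
        simp only [← mul_sum, natCast_card_filter]
    _ = _ := by simp only [Nat.Ioc_filter_dvd_card_eq_div]

theorem sum_evenSub_div_eq {N : ℕ} (hN : N ≠ 0) (n : ℕ) :
    ∑ J ∈ evenSub N, n / ∏ p ∈ J, p = ∑ J ∈ oddSub N, n / ∏ p ∈ J, p + coprimeCount N n := by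
  have h := coprimeCount_eq_sum_powerset hN n
  rw [← sum_filter_add_sum_filter_not _ (fun J => Even #J)] at h
  simp_rw [Nat.not_even_iff_odd] at h
  have heven : ∑ J ∈ evenSub N, (-1) ^ #J * ((n / ∏ p ∈ J, p : ℕ) : ℤ) =
      ∑ J ∈ evenSub N, ((n / ∏ p ∈ J, p : ℕ) : ℤ) :=
    sum_congr rfl fun J hJ => by rw [(mem_filter.mp hJ).2.neg_one_pow, one_mul]
  have hodd : ∑ J ∈ oddSub N, (-1) ^ #J * ((n / ∏ p ∈ J, p : ℕ) : ℤ) =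
      -∑ J ∈ oddSub N, ((n / ∏ p ∈ J, p : ℕ) : ℤ) := by
    rw [← sum_neg_distrib]
    exact sum_congr rfl fun J hJ => by rw [(mem_filter.mp hJ).2.neg_one_pow, neg_one_mul]
  rw [← evenSub, ← oddSub, heven, hodd] at h
  have : ((∑ J ∈ evenSub N, n / ∏ p ∈ J, p : ℕ) : ℤ) =
      ((∑ J ∈ oddSub N, n / ∏ p ∈ J, p + coprimeCount N n : ℕ) : ℤ) := by
    simp only [Nat.cast_sum, Nat.cast_add]
    linarith
  exact_mod_cast this

lemma div_mul_div_eq_mul_div_div {N d : ℕ} (hd : d ∣ N) (m t : ℕ) :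
    N / d * m / t = N * m / t / d := by
  rw [Nat.div_mul_right_comm hd, Nat.div_div_eq_div_mul, Nat.div_div_eq_div_mul, mul_comm d]

lemma prod_dvd_of_subset_primeFactors {N : ℕ} {J : Finset ℕ} (hJ : J ⊆ N.primeFactors) :
    ∏ p ∈ J, p ∣ N :=
  (prod_dvd_prod_of_subset _ _ _ hJ).trans N.prod_primeFactors_dvd

theorem factorization_prod_factorial_div {N m p b : ℕ} (hp : p.Prime) (hb : Nat.log p (N * m) < b)
    {S : Finset (Finset ℕ)} (hS : S ⊆ N.primeFactors.powerset) :
    (∏ J ∈ S, ((N / ∏ q ∈ J, q) * m).factorial).factorization p =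
      ∑ i ∈ Ico 1 b, ∑ J ∈ S, N * m / p ^ i / ∏ q ∈ J, q := by
  rw [Nat.factorization_prod fun _ _ => Nat.factorial_ne_zero _, Finsupp.finsetSum_apply, sum_comm]
  refine sum_congr rfl fun J hJ => ?_
  have hdvd := prod_dvd_of_subset_primeFactors (mem_powerset.mp (hS hJ))
  rw [Nat.factorization_factorial hp ((Nat.log_mono_right ?_).trans_lt hb)]
  · exact sum_congr rfl fun i _ => div_mul_div_eq_mul_div_div hdvd m _
  · exact Nat.mul_le_mul_right m (Nat.div_le_self _ _)

theorem factorization_Bnum {N m p b : ℕ} (hN : N ≠ 0) (hp : p.Prime)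
    (hb : Nat.log p (N * m) < b) :
    (Bnum N m).factorization p =
      (Bden N m).factorization p + ∑ i ∈ Ico 1 b, coprimeCount N (N * (m % p ^ i) / p ^ i) := by
  have hm : Nat.log p m < b :=
    (Nat.log_mono_right (Nat.le_mul_of_pos_left m (Nat.pos_of_ne_zero hN))).trans_lt hb
  rw [Bnum, Bden, Nat.factorization_mul (prod_ne_zero_iff.mpr fun _ _ => Nat.factorial_ne_zero _)
      (pow_ne_zero _ (Nat.factorial_ne_zero _)), Finsupp.add_apply, Nat.factorization_pow,
    Finsupp.smul_apply, smul_eq_mul, Nat.factorization_factorial hp hm,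
    factorization_prod_factorial_div (S := evenSub N) hp hb (filter_subset _ _),
    factorization_prod_factorial_div (S := oddSub N) hp hb (filter_subset _ _), mul_sum,
    ← sum_add_distrib, ← sum_add_distrib]
  refine sum_congr rfl fun i _ => ?_
  rw [sum_evenSub_div_eq hN, coprimeCount_mul_div _ _ _ (pow_pos hp.pos i), add_assoc]

theorem factorization_Bnum_one {N p b : ℕ} (hN : N ≠ 0) (hp : p.Prime) (hb : Nat.log p N < b) :
    (Bnum N 1).factorization p =
      (Bden N 1).factorization p + ∑ i ∈ Ico 1 b, coprimeCount N (N / p ^ i) := by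
  rw [factorization_Bnum hN hp (by rwa [mul_one])]
  congr 1
  refine sum_congr rfl fun i hi => ?_
  rw [Nat.one_mod_eq_one.mpr (Nat.one_lt_pow (by grind) hp.one_lt).ne', mul_one]

lemma pow_padicValNat_le_mod_pow {p m i : ℕ} (hp : p.Prime) (hm : m ≠ 0)
    (hi : padicValNat p m < i) : p ^ padicValNat p m ≤ m % p ^ i := by
  have hdvd : p ^ padicValNat p m ∣ m % p ^ i :=
    (Nat.dvd_mod_iff (pow_dvd_pow p hi.le)).mpr pow_padicValNat_dvd
  have hne : m % p ^ i ≠ 0 := fun h =>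
    hi.not_ge ((Nat.pow_dvd_iff_le_padicValNat hp.ne_one hm).mp (Nat.dvd_of_mod_eq_zero h))
  exact Nat.le_of_dvd (Nat.pos_of_ne_zero hne) hdvd

theorem sum_div_pow_le_sum_mul_mod_pow {f : ℕ → ℕ} (hf : Monotone f) {p m : ℕ} (hp : p.Prime)
    (hm : m ≠ 0) (N b : ℕ) :
    ∑ i ∈ Ico 1 b, f (N / p ^ i) ≤
      ∑ i ∈ Ico 1 (b + padicValNat p m), f (N * (m % p ^ i) / p ^ i) := by
  set v := padicValNat p m
  have hterm : ∀ i ∈ Ico 1 b, N / p ^ i ≤ N * (m % p ^ (i + v)) / p ^ (i + v) := fun i hi =>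
    calc N / p ^ i = N * p ^ v / p ^ (i + v) := by
          rw [pow_add, Nat.mul_div_mul_right _ _ (pow_pos hp.pos v)]
      _ ≤ _ := Nat.div_le_div_right
          (Nat.mul_le_mul_left N (pow_padicValNat_le_mod_pow hp hm (by grind)))
  calc ∑ i ∈ Ico 1 b, f (N / p ^ i)
      ≤ ∑ i ∈ Ico 1 b, f (N * (m % p ^ (i + v)) / p ^ (i + v)) :=
        sum_le_sum fun i hi => hf (hterm i hi)
    _ = ∑ i ∈ Ico (1 + v) (b + v), f (N * (m % p ^ i) / p ^ i) :=
        sum_Ico_add' (fun i => f (N * (m % p ^ i) / p ^ i)) _ _ _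
    _ ≤ _ := sum_le_sum_of_subset (Ico_subset_Ico_left (by omega))

lemma Bnum_pos (N m : ℕ) : 0 < Bnum N m :=
  prod_pos fun _ _ => Nat.factorial_pos _

lemma Bden_pos (N m : ℕ) : 0 < Bden N m :=
  Nat.mul_pos (prod_pos fun _ _ => Nat.factorial_pos _) (pow_pos (Nat.factorial_pos _) _)

theorem Bden_mul_Bnum_one_dvd {N m : ℕ} (hN : N ≠ 0) (hm : m ≠ 0) :
    Bden N m * Bnum N 1 ∣ Bnum N m * Bden N 1 := by
  rw [← Nat.factorization_le_iff_dvd (Nat.mul_pos (Bden_pos N m) (Bnum_pos N 1)).ne'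
    (Nat.mul_pos (Bnum_pos N m) (Bden_pos N 1)).ne']
  intro p
  by_cases hp : p.Prime
  · set b := Nat.log p (N * m) + 1
    have hb : Nat.log p N < b :=
      Nat.lt_add_one_of_le (Nat.log_mono_right (Nat.le_mul_of_pos_right N (Nat.pos_of_ne_zero hm)))
    have hcomp := sum_div_pow_le_sum_mul_mod_pow (coprimeCount_mono N) hp hm N b
    simp only [Nat.factorization_mul (Bden_pos _ _).ne' (Bnum_pos _ _).ne',
      Nat.factorization_mul (Bnum_pos _ _).ne' (Bden_pos _ _).ne', Finsupp.add_apply,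
      factorization_Bnum_one hN hp hb,
      factorization_Bnum hN hp (m := m) (b := b + padicValNat p m) (by omega)]
    omega
  · simp [Nat.factorization_eq_zero_of_not_prime _ hp]

theorem exists_BB_eq_BB_one_mul {N m : ℕ} (hN : N ≠ 0) (hm : m ≠ 0) :
    ∃ c : ℕ, BB N m = BB N 1 * c := by
  obtain ⟨c, hc⟩ := Bden_mul_Bnum_one_dvd hN hm
  refine ⟨c, ?_⟩
  have hc' : (Bnum N m * Bden N 1 : ℚ) = Bden N m * Bnum N 1 * c := by exact_mod_cast hc
  rw [BB, BB, div_mul_eq_mul_div, div_eq_div_iff (Nat.cast_ne_zero.mpr (Bden_pos N m).ne')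
    (Nat.cast_ne_zero.mpr (Bden_pos N 1).ne')]
  linear_combination hc'

/-- Lemma (Krattenthaler–Rivoal): for any vector `𝐍 = (N_1, …, N_k)` of positive
integers and any `m ≥ 1`, the integer `𝐁_𝐍(1)` divides the integer `𝐁_𝐍(m)`:
their quotient is an integer. -/
theorem BBvec_one_dvd_BBvec {k : ℕ} (N : Fin k → ℕ) (hN : ∀ i, 0 < N i)
    (m : ℕ) (hm : 1 ≤ m) :
    ∃ c : ℤ, BBvec N m = BBvec N 1 * (c : ℚ) := by
  choose c hc using fun i => exists_BB_eq_BB_one_mul (hN i).ne' (m := m) (by omega)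
  exact ⟨∏ i, c i, by simp [BBvec, hc, prod_mul_distrib]⟩
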